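/- arXiv:1108.1596 — 2 statements merged into one kernel-verified Lean document; each statement's English description precedes it below -/
import Mathlib

section
/- In the free group F_2 on two generators, the number of words of length n over the 4 letters {a, b, a^{-1}, b^{-1}} that reduce to the identity has generating function R(z) = 3/(1 + 2√(1 − 12z²)). In particular, the number of trivial words of odd length is 0. -/
open Filter Topology

/-- Evaluation of a formal letter in the free group on two generators. -/
def f2Letter (p : Fin 2 × Bool) : FreeGroup (Fin 2) :=
  if p.2 then (FreeGroup.of p.1)⁻¹ else FreeGroup.of p.1

/-- The number of words of length `n` over the four letters `a, b, a⁻¹, b⁻¹`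
that reduce to the identity of the free group `F₂`. -/
noncomputable def f2TrivialCount (n : ℕ) : ℕ :=
  Nat.card {w : Fin n → Fin 2 × Bool //
    (List.ofFn fun i => f2Letter (w i)).prod = 1}

/-!
Left multiplication by the generators and their inverses moves an element `g` of the free group
to its neighbours in the Cayley graph, a `k`-regular tree (`k = 2r` for rank `r`): if `g ≠ 1`,
exactly one of the `k` letters shortens the reduced word of `g` and the others lengthen it.
Peeling off the first letter of a word therefore shows that the number of words of length `n`
evaluating to `g` depends only on `n` and `|g|`, through the walk recursion of the tree; parity
is immediate.

For `2√(k-1)|z| < 1` the series `S_d = ∑ₙ treeWalks k n d · zⁿ` converge,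
`S_d = O((k-1)^(-d/2))`, and `S_0 = 1 + kzS_1`, `S_(d+1) = zS_d + (k-1)zS_(d+2)`. The closed
form `Qλᵈ`, where `λ` solves `(k-1)zλ² - λ + z = 0` and `Q = 1/(1 - kzλ)`, satisfies the same
relations. Their difference `T` vanishes by a maximum principle: `|T_d|√(k-1)ᵈ` is bounded and
each of its terms is at most `2√(k-1)|z| < 1` times another one, so its supremum is `0`.
-/

section WordCount

variable {β β' G : Type*} [Group G]

noncomputable def wordCount (ℓ : β → G) (n : ℕ) (g : G) : ℕ :=
  Nat.card {w : Fin n → β // (List.ofFn fun i => ℓ (w i)).prod = g}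

lemma wordCount_zero_one (ℓ : β → G) : wordCount ℓ 0 1 = 1 := by
  simp [wordCount]

lemma wordCount_zero_of_ne_one (ℓ : β → G) {g : G} (hg : g ≠ 1) : wordCount ℓ 0 g = 0 := by
  simp [wordCount, hg.symm]

lemma wordCount_succ [Fintype β] (ℓ : β → G) (n : ℕ) (g : G) :
    wordCount ℓ (n + 1) g = ∑ b, wordCount ℓ n ((ℓ b)⁻¹ * g) := by
  let e : {w : Fin (n + 1) → β // (List.ofFn fun i => ℓ (w i)).prod = g} ≃
      Σ b, {w : Fin n → β // (List.ofFn fun i => ℓ (w i)).prod = (ℓ b)⁻¹ * g} :=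
    (Equiv.subtypeEquiv (Fin.consEquiv fun _ : Fin (n + 1) => β).symm fun w => by
      rw [List.ofFn_succ, List.prod_cons, eq_inv_mul_iff_mul_eq]; rfl).trans
    (Equiv.subtypeProdEquivSigmaSubtype fun (b : β) (w : Fin n → β) =>
        (List.ofFn fun i => ℓ (w i)).prod = (ℓ b)⁻¹ * g)
  rw [wordCount, Nat.card_congr e, Nat.card_sigma]
  rfl

lemma wordCount_comp_equiv (ℓ : β → G) (e : β' ≃ β) (n : ℕ) (g : G) :
    wordCount (ℓ ∘ e) n g = wordCount ℓ n g :=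
  Nat.card_congr <| Equiv.subtypeEquiv ((Equiv.refl (Fin n)).arrowCongr e) fun w => by
    simp

end WordCount

/-- `treeWalks k n d` counts the walks of length `n` in the `k`-regular tree that start at distance
`d` from the root and end at the root. -/
def treeWalks (k : ℕ) : ℕ → ℕ → ℕ
  | 0, 0 => 1
  | 0, _ + 1 => 0
  | n + 1, 0 => k * treeWalks k n 1
  | n + 1, d + 1 => treeWalks k n d + (k - 1) * treeWalks k n (d + 2)

lemma treeWalks_eq_zero_of_odd {k n d : ℕ} (h : Odd (n + d)) : treeWalks k n d = 0 := by
  induction n generalizing d with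
  | zero => cases d with
    | zero => simp at h
    | succ d => rfl
  | succ n ih => cases d with
    | zero => simp [treeWalks, ih (d := 1) (by simpa using h)]
    | succ d =>
      have h' : Odd (n + d) := by
        rwa [show n + 1 + (d + 1) = n + d + 2 by ring, Nat.odd_add, iff_true_right even_two] at h
      rw [treeWalks, ih h', ih (by rwa [← add_assoc, Nat.odd_add, iff_true_right even_two]),
        mul_zero, add_zero]

namespace FreeGroup

variable {α : Type*} [DecidableEq α]

lemma toWord_mk_singleton_mul (p : α × Bool) {g : FreeGroup α} {y : α × Bool}
    {t : List (α × Bool)} (hg : g.toWord = y :: t) :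
    (mk [p] * g).toWord = if p.1 = y.1 ∧ p.2 = !y.2 then t else p :: y :: t := by
  rw [← mk_toWord (x := g), mul_mk, toWord_mk, List.singleton_append, reduce.cons,
    reduce_toWord, hg]

lemma norm_inv_mk_singleton_mul (x : α × Bool) {g : FreeGroup α} {y : α × Bool}
    {t : List (α × Bool)} (hg : g.toWord = y :: t) :
    ((mk [x])⁻¹ * g).norm = if x = y then t.length else t.length + 2 := by
  rw [inv_mk, show invRev [x] = [(x.1, !x.2)] by simp [invRev], norm,
    toWord_mk_singleton_mul _ hg]
  by_cases hxy : x = y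
  · simp [hxy]
  · simp [hxy, Prod.ext_iff.not.mp hxy]

lemma norm_inv_mk_singleton (x : α × Bool) : ((mk [x])⁻¹).norm = 1 := by
  rw [norm_inv_eq, norm, toWord_mk, reduce_singleton, List.length_singleton]

lemma sum_treeWalks_norm_inv_mk_singleton_mul [Fintype α] (n : ℕ) (g : FreeGroup α) :
    ∑ x, treeWalks (2 * Fintype.card α) n ((mk [x])⁻¹ * g).norm =
      treeWalks (2 * Fintype.card α) (n + 1) g.norm := by
  rcases hg : g.toWord with _ | ⟨y, t⟩
  · obtain rfl : g = 1 := toWord_eq_nil_iff.mp hg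
    simp only [mul_one, norm_inv_mk_singleton, Finset.sum_const, Finset.card_univ,
      Fintype.card_prod, Fintype.card_bool, mul_comm (Fintype.card α) 2, smul_eq_mul, norm_one,
      treeWalks]
  · simp only [(norm_inv_mk_singleton_mul · hg)]
    rw [norm, hg, Fintype.sum_eq_add_sum_compl y, if_pos rfl,
      Finset.sum_congr rfl (g := fun _ => treeWalks _ n (t.length + 2)) fun x hx => by
        rw [if_neg (by simpa using hx)]]
    simp only [Finset.sum_const, Finset.card_compl, Finset.card_singleton, Fintype.card_prod,
      Fintype.card_bool, mul_comm (Fintype.card α) 2, smul_eq_mul, List.length_cons, treeWalks]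

theorem wordCount_mk_eq_treeWalks [Fintype α] (n : ℕ) (g : FreeGroup α) :
    wordCount (fun p : α × Bool => mk [p]) n g = treeWalks (2 * Fintype.card α) n g.norm := by
  induction n generalizing g with
  | zero =>
    by_cases hg : g = 1
    · rw [hg, wordCount_zero_one, norm_one]; rfl
    · obtain ⟨d, hd⟩ := Nat.exists_eq_succ_of_ne_zero (mt norm_eq_zero.mp hg)
      rw [wordCount_zero_of_ne_one _ hg, hd]; rfl
  | succ n ih =>
    simp only [wordCount_succ, ih, sum_treeWalks_norm_inv_mk_singleton_mul]

end FreeGroup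

lemma f2Letter_eq_mk_comp :
    f2Letter =
      (fun p => FreeGroup.mk [p]) ∘ Equiv.prodCongr (Equiv.refl (Fin 2)) Equiv.boolNot := by
  funext ⟨i, b⟩
  cases b <;> rfl

lemma f2TrivialCount_eq_treeWalks (n : ℕ) : f2TrivialCount n = treeWalks 4 n 0 := by
  rw [f2TrivialCount, ← wordCount, f2Letter_eq_mk_comp, wordCount_comp_equiv,
    FreeGroup.wordCount_mk_eq_treeWalks, FreeGroup.norm_one, Fintype.card_fin]

lemma eq_zero_of_forall_exists_le_mul {ι : Type*} [Nonempty ι] {U : ι → ℝ} {r : ℝ}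
    (hU : ∀ i, 0 ≤ U i) (hbdd : BddAbove (Set.range U)) (hr₀ : 0 ≤ r) (hr₁ : r < 1)
    (h : ∀ i, ∃ j, U i ≤ r * U j) (i : ι) : U i = 0 := by
  have hsup : ⨆ i, U i ≤ r * ⨆ i, U i := ciSup_le fun i => by
    obtain ⟨j, hj⟩ := h i
    exact hj.trans (mul_le_mul_of_nonneg_left (le_ciSup hbdd j) hr₀)
  have hi := le_ciSup hbdd i
  nlinarith [hU i]

section TreeWalksGeneratingFunction

variable {k : ℕ} {z : ℝ}

lemma sqrt_natCast_sub_one_pos (hk : 2 ≤ k) : 0 < √(k - 1 : ℝ) :=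
  Real.sqrt_pos.mpr (by rw [sub_pos, Nat.one_lt_cast]; omega)

lemma sq_sqrt_natCast_sub_one (hk : 1 ≤ k) : √(k - 1 : ℝ) ^ 2 = k - 1 :=
  Real.sq_sqrt (by rw [sub_nonneg, Nat.one_le_cast]; omega)

lemma treeWalks_mul_sqrt_pow_le (hk : 2 ≤ k) (n d : ℕ) :
    treeWalks k n d * √(k - 1 : ℝ) ^ d ≤ (2 * √(k - 1 : ℝ)) ^ n := by
  set s := √(k - 1 : ℝ)
  have hs := sqrt_natCast_sub_one_pos hk
  have hs2 : s ^ 2 = k - 1 := sq_sqrt_natCast_sub_one (by omega)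
  have hcast : ((k - 1 : ℕ) : ℝ) = s ^ 2 := by rw [Nat.cast_sub (by omega), hs2, Nat.cast_one]
  induction n generalizing d with
  | zero => cases d <;> simp [treeWalks]
  | succ n ih => cases d with
    | zero =>
      have h1 := ih 1
      have hk' : (2 : ℝ) ≤ k := by exact_mod_cast hk
      simp only [treeWalks, Nat.cast_mul, pow_zero, mul_one, pow_succ] at h1 ⊢
      nlinarith [Nat.cast_nonneg (α := ℝ) (treeWalks k n 1),
        pow_pos (by positivity : 0 < 2 * s) n]
    | succ d =>
      calc (treeWalks k (n + 1) (d + 1) : ℝ) * s ^ (d + 1)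
          = s * (treeWalks k n d * s ^ d) + s * (treeWalks k n (d + 2) * s ^ (d + 2)) := by
            rw [treeWalks, Nat.cast_add, Nat.cast_mul, hcast]; ring
        _ ≤ s * (2 * s) ^ n + s * (2 * s) ^ n := by gcongr <;> apply ih
        _ = (2 * s) ^ (n + 1) := by ring

lemma norm_treeWalks_mul_pow_le (hk : 2 ≤ k) (n d : ℕ) :
    ‖(treeWalks k n d : ℝ) * z ^ n‖ ≤
      (2 * √(k - 1 : ℝ) * |z|) ^ n / √(k - 1 : ℝ) ^ d := by
  have hs := sqrt_natCast_sub_one_pos hk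
  rw [norm_mul, norm_pow, Real.norm_natCast, Real.norm_eq_abs, mul_pow, div_eq_mul_inv,
    mul_right_comm]
  gcongr
  rw [← div_eq_mul_inv, le_div_iff₀ (by positivity)]
  exact treeWalks_mul_sqrt_pow_le hk n d

lemma summable_treeWalks_mul_pow (hk : 2 ≤ k) (hz : 2 * √(k - 1 : ℝ) * |z| < 1) (d : ℕ) :
    Summable fun n => (treeWalks k n d : ℝ) * z ^ n :=
  .of_norm_bounded ((summable_geometric_of_lt_one (by positivity) hz).div_const _)
    (norm_treeWalks_mul_pow_le hk · d)

lemma abs_tsum_treeWalks_mul_pow_le (hk : 2 ≤ k) (hz : 2 * √(k - 1 : ℝ) * |z| < 1) (d : ℕ) :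
    |∑' n, (treeWalks k n d : ℝ) * z ^ n| * √(k - 1 : ℝ) ^ d ≤
      (1 - 2 * √(k - 1 : ℝ) * |z|)⁻¹ := by
  have hgeom := (summable_geometric_of_lt_one (by positivity) hz).div_const (√(k - 1 : ℝ) ^ d)
  rw [← le_div_iff₀ (pow_pos (sqrt_natCast_sub_one_pos hk) d)]
  calc |∑' n, (treeWalks k n d : ℝ) * z ^ n|
      ≤ ∑' n, (2 * √(k - 1 : ℝ) * |z|) ^ n / √(k - 1 : ℝ) ^ d :=
        tsum_of_norm_bounded hgeom.hasSum (norm_treeWalks_mul_pow_le hk · d)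
    _ = (1 - 2 * √(k - 1 : ℝ) * |z|)⁻¹ / √(k - 1 : ℝ) ^ d := by
        rw [tsum_div_const, tsum_geometric_of_lt_one (by positivity) hz]

lemma tsum_treeWalks_zero_mul_pow (hk : 2 ≤ k) (hz : 2 * √(k - 1 : ℝ) * |z| < 1) :
    ∑' n, (treeWalks k n 0 : ℝ) * z ^ n =
      1 + k * z * ∑' n, (treeWalks k n 1 : ℝ) * z ^ n := by
  rw [(summable_treeWalks_mul_pow hk hz 0).tsum_eq_zero_add, ← tsum_mul_left]
  congr 1
  · simp [treeWalks]
  · refine tsum_congr fun n => ?_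
    rw [treeWalks, Nat.cast_mul]
    ring

lemma tsum_treeWalks_succ_mul_pow (hk : 2 ≤ k) (hz : 2 * √(k - 1 : ℝ) * |z| < 1) (d : ℕ) :
    ∑' n, (treeWalks k n (d + 1) : ℝ) * z ^ n =
      z * ∑' n, (treeWalks k n d : ℝ) * z ^ n +
        (k - 1) * z * ∑' n, (treeWalks k n (d + 2) : ℝ) * z ^ n := by
  rw [(summable_treeWalks_mul_pow hk hz (d + 1)).tsum_eq_zero_add, ← tsum_mul_left,
    ← tsum_mul_left, ← Summable.tsum_add ((summable_treeWalks_mul_pow hk hz d).mul_left _)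
      ((summable_treeWalks_mul_pow hk hz (d + 2)).mul_left _)]
  rw [show treeWalks k 0 (d + 1) = 0 from rfl, Nat.cast_zero, zero_mul, zero_add]
  refine tsum_congr fun n => ?_
  rw [treeWalks, Nat.cast_add, Nat.cast_mul, Nat.cast_sub (by omega), Nat.cast_one]
  ring

lemma eq_zero_of_treeRecurrence (hk : 2 ≤ k) (hz : 2 * √(k - 1 : ℝ) * |z| < 1)
    {T : ℕ → ℝ}
    (h₀ : T 0 = k * z * T 1) (hsucc : ∀ d, T (d + 1) = z * T d + (k - 1) * z * T (d + 2))
    (hbdd : BddAbove (Set.range fun d => |T d| * √(k - 1 : ℝ) ^ d)) (d : ℕ) : T d = 0 := by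
  set s := √(k - 1 : ℝ)
  have hs := sqrt_natCast_sub_one_pos hk
  have hs2 : s ^ 2 = k - 1 := sq_sqrt_natCast_sub_one (by omega)
  have hk' : (2 : ℝ) ≤ k := by exact_mod_cast hk
  have key : ∀ d, ∃ e, |T d| * s ^ d ≤ 2 * s * |z| * (|T e| * s ^ e) := by
    rintro (_ | d)
    · refine ⟨1, ?_⟩
      rw [h₀, abs_mul, abs_mul, Nat.abs_cast, pow_zero, mul_one, pow_one]
      nlinarith [mul_nonneg (abs_nonneg z) (abs_nonneg (T 1))]
    · have hle : |T (d + 1)| * s ^ (d + 1) ≤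
          s * |z| * (|T d| * s ^ d) + s * |z| * (|T (d + 2)| * s ^ (d + 2)) :=
        calc |T (d + 1)| * s ^ (d + 1)
            ≤ (|z| * |T d| + (k - 1) * |z| * |T (d + 2)|) * s ^ (d + 1) := by
              gcongr
              rw [hsucc]
              refine (abs_add_le _ _).trans_eq ?_
              rw [abs_mul, abs_mul, abs_mul, abs_of_nonneg (by linarith : (0 : ℝ) ≤ k - 1)]
          _ = s * |z| * (|T d| * s ^ d) + s * |z| * (|T (d + 2)| * s ^ (d + 2)) := by
              rw [← hs2]; ring
      rcases le_total (|T d| * s ^ d) (|T (d + 2)| * s ^ (d + 2)) with h | h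
      · exact ⟨d + 2, by nlinarith [mul_nonneg hs.le (abs_nonneg z)]⟩
      · exact ⟨d, by nlinarith [mul_nonneg hs.le (abs_nonneg z)]⟩
  have h := eq_zero_of_forall_exists_le_mul (fun d => by positivity) hbdd (by positivity) hz key d
  exact abs_eq_zero.mp ((mul_eq_zero.mp h).resolve_right (pow_pos hs d).ne')

/-- The root of `(k - 1) z λ² - λ + z = 0` vanishing at `z = 0`: the generating function of walks
from a neighbour of the root that reach the root for the first time at their last step. -/
noncomputable def firstPassageGF (k : ℕ) (z : ℝ) : ℝ :=
  2 * z / (1 + √(1 - 4 * (k - 1) * z ^ 2))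

noncomputable def closedWalkGF (k : ℕ) (z : ℝ) : ℝ :=
  2 * (k - 1) / (k - 2 + k * √(1 - 4 * (k - 1) * z ^ 2))

lemma four_mul_sq_lt_one (hk : 1 ≤ k) (hz : 2 * √(k - 1 : ℝ) * |z| < 1) :
    4 * (k - 1) * z ^ 2 < 1 := by
  calc 4 * (k - 1) * z ^ 2 = (2 * √(k - 1 : ℝ) * |z|) ^ 2 := by
        rw [mul_pow, mul_pow, sq_sqrt_natCast_sub_one hk, sq_abs]; ring
    _ < 1 := pow_lt_one₀ (by positivity) hz two_ne_zero

lemma firstPassageGF_eq (h : 4 * (k - 1) * z ^ 2 ≤ 1) :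
    firstPassageGF k z = z + (k - 1) * z * firstPassageGF k z ^ 2 := by
  unfold firstPassageGF
  have hw2 := Real.sq_sqrt (sub_nonneg.mpr h)
  set w := √(1 - 4 * (k - 1) * z ^ 2)
  have hw : 1 + w ≠ 0 := by positivity
  field_simp
  linear_combination (-z) * hw2

lemma closedWalkGF_eq (hk : 2 ≤ k) (h : 4 * (k - 1) * z ^ 2 < 1) :
    closedWalkGF k z = 1 + k * z * firstPassageGF k z * closedWalkGF k z := by
  unfold firstPassageGF closedWalkGF
  have hw := Real.sqrt_pos.mpr (sub_pos.mpr h)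
  have hw2 := Real.sq_sqrt (sub_pos.mpr h).le
  set w := √(1 - 4 * (k - 1) * z ^ 2)
  have hk' : (2 : ℝ) ≤ k := by exact_mod_cast hk
  have hden : (k : ℝ) - 2 + k * w ≠ 0 := by positivity
  have hw1 : 1 + w ≠ 0 := by positivity
  field_simp
  linear_combination (-(k : ℝ)) * hw2

lemma abs_firstPassageGF_mul_sqrt_le (hz : 2 * √(k - 1 : ℝ) * |z| < 1) :
    |firstPassageGF k z| * √(k - 1 : ℝ) ≤ 1 := by
  have hle : |firstPassageGF k z| ≤ 2 * |z| := by
    have hw : 0 < 1 + √(1 - 4 * (k - 1) * z ^ 2) := by positivity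
    rw [firstPassageGF, abs_div, abs_mul, abs_two, abs_of_pos hw]
    exact div_le_self (by positivity) (le_add_of_nonneg_right (Real.sqrt_nonneg _))
  nlinarith [Real.sqrt_nonneg (k - 1 : ℝ)]

theorem tsum_treeWalks_mul_pow (hk : 2 ≤ k) (hz : 2 * √(k - 1 : ℝ) * |z| < 1) (d : ℕ) :
    ∑' n, (treeWalks k n d : ℝ) * z ^ n = closedWalkGF k z * firstPassageGF k z ^ d := by
  have h4 := four_mul_sq_lt_one (by omega) hz
  have hlam := firstPassageGF_eq h4.le
  have hQ := closedWalkGF_eq hk h4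
  refine sub_eq_zero.mp (eq_zero_of_treeRecurrence hk hz
    (T := fun d =>
      ∑' n, (treeWalks k n d : ℝ) * z ^ n - closedWalkGF k z * firstPassageGF k z ^ d)
    ?_ ?_ ?_ d)
  · rw [tsum_treeWalks_zero_mul_pow hk hz]
    linear_combination (-1 : ℝ) * hQ
  · intro d
    rw [tsum_treeWalks_succ_mul_pow hk hz]
    linear_combination (-(closedWalkGF k z) * firstPassageGF k z ^ d) * hlam
  · refine ⟨(1 - 2 * √(k - 1 : ℝ) * |z|)⁻¹ + |closedWalkGF k z|, ?_⟩
    rintro _ ⟨d, rfl⟩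
    have hS := abs_tsum_treeWalks_mul_pow_le hk hz d
    have hpow := pow_le_one₀ (by positivity) (abs_firstPassageGF_mul_sqrt_le (k := k) hz) (n := d)
    calc _ ≤ |∑' n, (treeWalks k n d : ℝ) * z ^ n| * √(k - 1 : ℝ) ^ d +
          |closedWalkGF k z| * (|firstPassageGF k z| * √(k - 1 : ℝ)) ^ d := by
          rw [mul_pow, ← mul_assoc, ← abs_pow, ← abs_mul, ← add_mul]
          dsimp only
          gcongr
          exact abs_sub _ _
      _ ≤ _ := by gcongr; nlinarith [abs_nonneg (closedWalkGF k z)]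

theorem hasSum_treeWalks_zero (hk : 2 ≤ k) (hz : 2 * √(k - 1 : ℝ) * |z| < 1) :
    HasSum (fun n => (treeWalks k n 0 : ℝ) * z ^ n) (closedWalkGF k z) := by
  simpa [tsum_treeWalks_mul_pow hk hz] using (summable_treeWalks_mul_pow hk hz 0).hasSum

end TreeWalksGeneratingFunction

/-- In `F₂`, the generating function of trivial words is
`R(z) = 3 / (1 + 2√(1 - 12z²))` (valid for `|z| < 1/(2√3)`), and the number of
trivial words of odd length is `0`. -/
theorem stmt5 :
    (∀ z : ℝ, |z| < 1 / (2 * Real.sqrt 3) →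
      HasSum (fun n : ℕ => (f2TrivialCount n : ℝ) * z ^ n)
        (3 / (1 + 2 * Real.sqrt (1 - 12 * z ^ 2)))) ∧
      ∀ n : ℕ, Odd n → f2TrivialCount n = 0 := by
  simp only [f2TrivialCount_eq_treeWalks]
  refine ⟨fun z hz => ?_, fun n hn => treeWalks_eq_zero_of_odd (by simpa using hn)⟩
  have hz' : 2 * √((4 : ℕ) - 1 : ℝ) * |z| < 1 := by
    rw [lt_div_iff₀ (by positivity), mul_comm] at hz
    norm_num
    linarith
  convert hasSum_treeWalks_zero (by norm_num) hz' using 1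
  rw [closedWalkGF]
  norm_num
  rw [div_eq_div_iff (by positivity) (by positivity)]
  ring
end

section
/- For the free group F_2 on two generators with the standard generating set, the growth rate of trivial words is ρ = 2√3, i.e., limsup r_n^{1/n} = 2√3, where r_n counts length-n words over the 4-letter alphabet reducing to the identity. -/
open Filter Topology ENNReal

/-!
Words over `α × Bool` are walks from `1` in the Cayley graph of `FreeGroup α`, a tree of degree
`2k` with `k = card α`; put `q = 2k - 1`. Prepending the `2k` letters to a word whose value has
length `h > 0` yields one value of length `h - 1` and `q` of length `h + 1`, so `h ↦ q^(-h/2)`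
is a sub-eigenfunction of the adjacency operator with eigenvalue `2√q`; since it equals `1` at the
identity, at most `(2√q)^n` words of length `n` are trivial. Conversely, cutting a closed walk at
its first return to `1` gives the Catalan recursion, so at least
`q^n · catalan n ≥ (4q)^n / (2n)^2` words of length `2n` are trivial.
Hence `limsup r_n^(1/n) = 2√q`, which is `2√3` for `F₂`.
-/

theorem ENNReal.limsup_rpow_one_div_le_of_le_pow {u : ℕ → ℝ≥0∞} {c : ℝ≥0∞}
    (h : ∀ n, u n ≤ c ^ n) : limsup (fun n : ℕ => u n ^ (1 / (n : ℝ))) atTop ≤ c := by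
  refine limsup_le_of_le (h := eventually_atTop.2 ⟨1, fun n hn => ?_⟩)
  calc u n ^ (1 / (n : ℝ)) ≤ (c ^ n) ^ (1 / (n : ℝ)) := rpow_le_rpow (h n) (by positivity)
    _ = c := by rw [one_div, pow_rpow_inv_natCast (by omega)]

theorem ENNReal.tendsto_natCast_pow_rpow_one_div (k : ℕ) :
    Tendsto (fun n : ℕ => ((n : ℝ≥0∞) ^ k) ^ (1 / (n : ℝ))) atTop (𝓝 1) := by
  have hroot :
      Tendsto (fun n : ℕ => ENNReal.ofReal ((n : ℝ) ^ (1 / (n : ℝ)))) atTop (𝓝 1) := by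
    simpa only [Function.comp_def, ofReal_one] using
      ENNReal.tendsto_ofReal (tendsto_rpow_div.comp tendsto_natCast_atTop_atTop)
  convert ENNReal.Tendsto.pow (n := k) hroot using 2 with n
  · rw [← ofReal_rpow_of_nonneg (Nat.cast_nonneg _) (by positivity), ofReal_natCast,
      ← rpow_natCast, ← rpow_natCast, ← rpow_mul, ← rpow_mul, mul_comm]
  · simp

theorem ENNReal.le_limsup_rpow_one_div_of_frequently {u : ℕ → ℝ≥0∞} {c : ℝ≥0∞}
    (k : ℕ) (h : ∃ᶠ n : ℕ in atTop, c ^ n ≤ (n : ℝ≥0∞) ^ k * u n) :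
    c ≤ limsup (fun n : ℕ => u n ^ (1 / (n : ℝ))) atTop := by
  have hv := tendsto_natCast_pow_rpow_one_div k
  calc c ≤ limsup ((fun n : ℕ => ((n : ℝ≥0∞) ^ k) ^ (1 / (n : ℝ))) *
        fun n : ℕ => u n ^ (1 / (n : ℝ))) atTop := by
        refine le_limsup_of_frequently_le (h.mp (eventually_atTop.2 ⟨1, fun n hn hn' => ?_⟩))
        calc c = (c ^ n) ^ (1 / (n : ℝ)) := by rw [one_div, pow_rpow_inv_natCast (by omega)]
          _ ≤ ((n : ℝ≥0∞) ^ k * u n) ^ (1 / (n : ℝ)) := rpow_le_rpow hn' (by positivity)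
          _ = _ := mul_rpow_of_nonneg _ _ (by positivity)
    _ ≤ 1 * limsup (fun n : ℕ => u n ^ (1 / (n : ℝ))) atTop := by
        rw [← hv.limsup_eq]
        exact limsup_mul_le' (Or.inl (hv.limsup_eq ▸ one_ne_zero))
          (Or.inl (hv.limsup_eq ▸ one_ne_top))
    _ = _ := one_mul _

open Finset

namespace FreeGroup

variable {α : Type*}

variable (α) in
noncomputable def trivialWordCount (n : ℕ) : ℕ :=
  Nat.card {w : Fin n → α × Bool // mk (List.ofFn w) = 1}

theorem mk_cons_append_cons (x : α × Bool) (a b : List (α × Bool)) :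
    mk (x :: a ++ (x.1, !x.2) :: b) = mk [x] * mk a * (mk [x])⁻¹ * mk b := by
  simp [inv_mk, invRev, mul_mk]

variable [DecidableEq α]

theorem toWord_mk_singleton_mul_s16 (x : α × Bool) (g : FreeGroup α) :
    (mk [x] * g).toWord =
      if g.toWord.head? = some (x.1, !x.2) then g.toWord.tail else x :: g.toWord := by
  conv_lhs => rw [← mk_toWord (x := g), mul_mk, List.singleton_append, toWord_mk, reduce.cons,
    reduce_toWord]
  rcases g.toWord with _ | ⟨⟨a, b⟩, t⟩
  · rfl
  · cases b <;> cases x.2 <;> simp [eq_comm]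

theorem toWord_mk_cons {x : α × Bool} {l : List (α × Bool)}
    (h : (mk l).toWord.head? ≠ some (x.1, !x.2)) : (mk (x :: l)).toWord = x :: (mk l).toWord := by
  rw [← List.singleton_append, ← mul_mk, toWord_mk_singleton_mul_s16, if_neg h]

theorem norm_mk_singleton_mul (x : α × Bool) (g : FreeGroup α) :
    norm (mk [x] * g) = if g.toWord.head? = some (x.1, !x.2) then norm g - 1 else norm g + 1 := by
  simp only [norm, toWord_mk_singleton_mul_s16]
  split_ifs <;> simp

section

variable [Fintype α]

theorem sum_inv_sqrt_pow_norm_mk_singleton_mul_le [Nonempty α] (g : FreeGroup α) :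
    ∑ x : α × Bool, (√(2 * Fintype.card α - 1))⁻¹ ^ norm (mk [x] * g)
      ≤ 2 * √(2 * Fintype.card α - 1) * (√(2 * Fintype.card α - 1))⁻¹ ^ norm g := by
  set s := √(2 * Fintype.card α - 1 : ℝ)
  have hk : 1 ≤ Fintype.card α := Fintype.card_pos
  have hk' : (1 : ℝ) ≤ Fintype.card α := by exact_mod_cast hk
  have hs2 : s ^ 2 = 2 * Fintype.card α - 1 := Real.sq_sqrt (by linarith)
  have hs : 0 < s := Real.sqrt_pos.2 (by linarith)
  rcases hg : g.toWord with _ | ⟨hd, tl⟩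
  · obtain rfl : g = 1 := toWord_eq_nil_iff.1 hg
    have hcard : (Fintype.card (α × Bool) : ℝ) = 2 * Fintype.card α := by
      simp [Fintype.card_prod, mul_comm]
    have hnorm (x : α × Bool) : norm (mk [x]) = 1 := by simp [norm, toWord_mk]
    simp only [mul_one, hnorm, norm_one, sum_const, card_univ, nsmul_eq_mul, hcard,
      pow_one, pow_zero, ← div_eq_mul_inv, div_le_iff₀ hs]
    nlinarith
  -- only the letter `(hd.1, !hd.2)`, inverse to the first letter of `g`, cancels
  have hnorm (x : α × Bool) : norm (mk [x] * g) =
      if x = (hd.1, !hd.2) then tl.length else tl.length + 2 := by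
    rw [norm_mk_singleton_mul, hg]
    simp only [norm, hg, List.head?_cons, Option.some.injEq, List.length_cons]
    congr 1
    ext; constructor <;> rintro rfl <;> simp
  have hg' : norm g = tl.length + 1 := by simp [norm, hg]
  rw [Fintype.sum_eq_add_sum_compl (hd.1, !hd.2), hnorm, if_pos rfl,
    sum_congr rfl fun x hx => by rw [hnorm, if_neg (by simpa using hx)],
    sum_const, card_compl, card_singleton, nsmul_eq_mul, hg', Fintype.card_prod,
    Fintype.card_bool, Nat.cast_sub (by omega), Nat.cast_mul, Nat.cast_ofNat, Nat.cast_one,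
    mul_comm _ (2 : ℝ), ← hs2]
  apply le_of_eq
  simp only [inv_pow, pow_succ]
  field_simp
  norm_num

theorem sum_inv_sqrt_pow_norm_mk_ofFn_le [Nonempty α] (n : ℕ) :
    ∑ w : Fin n → α × Bool, (√(2 * Fintype.card α - 1))⁻¹ ^ norm (mk (List.ofFn w))
      ≤ (2 * √(2 * Fintype.card α - 1)) ^ n := by
  induction n with
  | zero => simp [← one_eq_mk]
  | succ n ih =>
    rw [← (Fin.consEquiv fun _ => α × Bool).sum_comp, Fintype.sum_prod_type, sum_comm,
      pow_succ']
    calc _ ≤ ∑ w : Fin n → α × Bool, 2 * √(2 * Fintype.card α - 1) *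
          (√(2 * Fintype.card α - 1))⁻¹ ^ norm (mk (List.ofFn w)) :=
          sum_le_sum fun w _ => by
            have hcons (x : α × Bool) :
                mk (List.ofFn (Fin.consEquiv (fun _ => α × Bool) (x, w)))
                  = mk [x] * mk (List.ofFn w) := by
              rw [mul_mk]; simp [List.ofFn_succ]
            simpa only [hcons] using
              sum_inv_sqrt_pow_norm_mk_singleton_mul_le (mk (List.ofFn w))
      _ ≤ _ := by rw [← mul_sum]; gcongr

theorem trivialWordCount_le [Nonempty α] (n : ℕ) :
    (trivialWordCount α n : ℝ) ≤ (2 * √(2 * Fintype.card α - 1)) ^ n := by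
  rw [trivialWordCount, Nat.card_eq_fintype_card, Fintype.card_subtype, card_filter,
    Nat.cast_sum]
  refine le_trans (sum_le_sum fun w _ => ?_) (sum_inv_sqrt_pow_norm_mk_ofFn_le n)
  split_ifs with h
  · simp [h]
  · exact_mod_cast pow_nonneg (inv_nonneg.2 (Real.sqrt_nonneg _)) _

end

-- `(y.1, !y.2)` is the letter inverse to `y`. An excursion below `y` is a closed walk that
-- never enters the branch at `1` starting with `y⁻¹`, so it can follow a step `y` without
-- backtracking.
def IsExcursion (y : α × Bool) (l : List (α × Bool)) : Prop :=
  mk l = 1 ∧ ∀ k, (mk (l.take k)).toWord.head? ≠ some (y.1, !y.2)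

theorem IsExcursion.cons_append_cons {x y : α × Bool} {a b : List (α × Bool)}
    (hxy : x ≠ (y.1, !y.2)) (ha : IsExcursion x a) (hb : IsExcursion y b) :
    IsExcursion y (x :: a ++ (x.1, !x.2) :: b) := by
  refine ⟨by rw [mk_cons_append_cons, ha.1, hb.1]; group, fun k => ?_⟩
  rcases k with _ | k
  · simp [← one_eq_mk]
  rw [List.cons_append, List.take_succ_cons]
  rcases le_or_gt k a.length with hk | hk
  · rw [List.take_append_of_le_length hk, toWord_mk_cons (ha.2 k)]
    simpa using hxy
  · obtain ⟨j, rfl⟩ := Nat.exists_eq_add_of_lt hk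
    rw [List.take_append, List.take_of_length_le (by omega), add_assoc, Nat.add_sub_cancel_left,
      List.take_succ_cons, ← List.cons_append, mk_cons_append_cons, ha.1, mul_one,
      mul_inv_cancel, one_mul]
    exact hb.2 j

-- `x :: a ++ [x⁻¹]` is the first return to `1`: the values of shorter nonempty prefixes are
-- reduced words starting with `x`.
theorem length_le_of_cons_append_cons {x : α × Bool} {a b a' c : List (α × Bool)}
    (ha : mk a = 1) (ha' : IsExcursion x a') (h : x :: a ++ (x.1, !x.2) :: b = x :: a' ++ c) :
    a'.length ≤ a.length := by
  by_contra! hlt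
  have hprefix := congrArg (fun l => mk (l.take (a.length + 2))) h
  simp only [List.cons_append, List.take_succ_cons, List.take_append, List.take_of_length_le
    (Nat.le_succ _), Nat.add_sub_cancel_left, List.take_append_of_le_length hlt, List.take_zero,
    Nat.succ_eq_add_one] at hprefix
  rw [← List.cons_append, mk_cons_append_cons, ha, mul_one, mul_inv_cancel, one_mul,
    ← one_eq_mk] at hprefix
  have hcons := toWord_mk_cons (ha'.2 (a.length + 1))
  rw [← hprefix, toWord_one] at hcons
  exact List.cons_ne_nil _ _ hcons.symm

theorem IsExcursion.cons_append_cons_inj {x x' : α × Bool} {a a' b b' : List (α × Bool)}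
    (ha : IsExcursion x a) (ha' : IsExcursion x' a')
    (h : x :: a ++ (x.1, !x.2) :: b = x' :: a' ++ (x'.1, !x'.2) :: b') :
    x = x' ∧ a = a' ∧ b = b' := by
  obtain rfl : x = x' := (List.cons.inj h).1
  have hlen : a.length = a'.length :=
    (length_le_of_cons_append_cons ha'.1 ha h.symm).antisymm
      (length_le_of_cons_append_cons ha.1 ha' h)
  obtain ⟨rfl, hb⟩ := List.append_inj (List.cons.inj h).2 hlen
  exact ⟨rfl, rfl, (List.cons.inj hb).2⟩

variable [Fintype α]

def glueExcursions (y : α × Bool) (A : α × Bool → Finset (List (α × Bool)))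
    (B : Finset (List (α × Bool))) : Finset (List (α × Bool)) :=
  (univ.erase (y.1, !y.2)).biUnion fun x =>
    (A x ×ˢ B).image fun ab => x :: ab.1 ++ (x.1, !x.2) :: ab.2

theorem card_glueExcursions (y : α × Bool) {A : α × Bool → Finset (List (α × Bool))}
    {B : Finset (List (α × Bool))} {m : ℕ} (hA : ∀ x, ∀ a ∈ A x, IsExcursion x a)
    (hm : ∀ x, (A x).card = m) :
    (glueExcursions y A B).card = (2 * Fintype.card α - 1) * (m * B.card) := by
  rw [glueExcursions, card_biUnion, sum_congr rfl fun x _ => by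
      rw [card_image_of_injOn, card_product, hm]
      rintro ⟨a, b⟩ hab ⟨a', b'⟩ hab' h
      obtain ⟨-, rfl, rfl⟩ :=
        (hA x a (mem_product.1 hab).1).cons_append_cons_inj (hA x a' (mem_product.1 hab').1) h
      rfl,
    sum_const, card_erase_of_mem (mem_univ _), card_univ, Fintype.card_prod, Fintype.card_bool,
    smul_eq_mul, mul_comm (Fintype.card α)]
  intro x _ x' _ hxx'
  refine disjoint_left.2 fun l hl hl' => hxx' ?_
  simp only [mem_image, mem_product, Prod.exists] at hl hl'
  obtain ⟨a, b, ⟨ha, -⟩, rfl⟩ := hl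
  obtain ⟨a', b', ⟨ha', -⟩, h⟩ := hl'
  exact ((hA x a ha).cons_append_cons_inj (hA x' a' ha') h.symm).1

-- Excursions of length `2(n + 1)`, cut at their first return to `1` after `2(i + 1)` steps.
def excursions : α × Bool → ℕ → Finset (List (α × Bool))
  | _, 0 => {[]}
  | y, n + 1 => (antidiagonal n).attach.biUnion fun ij =>
      glueExcursions y (fun x => excursions x ij.1.1) (excursions y ij.1.2)
termination_by _ n => n
decreasing_by
  all_goals
    have := HasAntidiagonal.mem_antidiagonal.1 ij.2
    omega

theorem isExcursion_of_mem_excursions {y : α × Bool} {n : ℕ} {l : List (α × Bool)}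
    (hl : l ∈ excursions y n) : IsExcursion y l ∧ l.length = 2 * n := by
  induction n using Nat.strong_induction_on generalizing y l with
  | _ n ih =>
  rcases n with _ | n
  · obtain rfl : l = [] := by simpa [excursions] using hl
    exact ⟨⟨(one_eq_mk).symm, fun k => by simp [← one_eq_mk]⟩, rfl⟩
  rw [excursions] at hl
  simp only [glueExcursions, mem_biUnion, mem_attach, true_and, mem_erase, mem_univ, and_true,
    mem_image, mem_product, Subtype.exists, HasAntidiagonal.mem_antidiagonal] at hl
  obtain ⟨⟨i, j⟩, hij, x, hxy, ⟨a, b⟩, ⟨ha, hb⟩, rfl⟩ := hl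
  obtain ⟨ha, hla⟩ := ih i (by omega) ha
  obtain ⟨hb, hlb⟩ := ih j (by omega) hb
  refine ⟨ha.cons_append_cons hxy hb, ?_⟩
  simp only [List.cons_append, List.length_cons, List.length_append, hla, hlb]
  omega

theorem card_excursions (y : α × Bool) (n : ℕ) :
    (excursions y n).card = (2 * Fintype.card α - 1) ^ n * catalan n := by
  induction n using Nat.strong_induction_on generalizing y with
  | _ n ih =>
  rcases n with _ | n
  · simp [excursions]
  have hlt {ij : ℕ × ℕ} (hij : ij ∈ antidiagonal n) : ij.1 < n + 1 ∧ ij.2 < n + 1 := by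
    have := HasAntidiagonal.mem_antidiagonal.1 hij
    omega
  rw [excursions, card_biUnion]
  · rw [sum_attach (antidiagonal n) fun ij =>
        (glueExcursions y (fun x => excursions x ij.1) (excursions y ij.2)).card,
      catalan_succ', mul_sum]
    refine sum_congr rfl fun ij hij => ?_
    rw [card_glueExcursions y (fun x _ hl => (isExcursion_of_mem_excursions hl).1)
      fun x => ih _ (hlt hij).1 x, ih _ (hlt hij).2, ← HasAntidiagonal.mem_antidiagonal.1 hij]
    ring
  · rintro ⟨⟨i, j⟩, hij⟩ - ⟨⟨i', j'⟩, hij'⟩ - hne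
    refine disjoint_left.2 fun l hl hl' => hne ?_
    simp only [glueExcursions, mem_biUnion, mem_image, mem_product] at hl hl'
    obtain ⟨x, -, ⟨a, b⟩, ⟨ha, -⟩, rfl⟩ := hl
    obtain ⟨x', -, ⟨a', b'⟩, ⟨ha', -⟩, h⟩ := hl'
    obtain ⟨hax, hla⟩ := isExcursion_of_mem_excursions ha
    obtain ⟨hax', hla'⟩ := isExcursion_of_mem_excursions ha'
    obtain ⟨-, rfl, -⟩ := hax.cons_append_cons_inj hax' h.symm
    have hsum : i + j = n := HasAntidiagonal.mem_antidiagonal.1 hij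
    have hsum' : i' + j' = n := HasAntidiagonal.mem_antidiagonal.1 hij'
    dsimp only at hla hla'
    simp only [Subtype.mk.injEq, Prod.mk.injEq]
    omega

theorem card_excursions_le_trivialWordCount (y : α × Bool) (n : ℕ) :
    (excursions y n).card ≤ trivialWordCount α (2 * n) := by
  have hlen (l : excursions y n) : l.1.length = 2 * n := (isExcursion_of_mem_excursions l.2).2
  set toTuple : excursions y n → Fin (2 * n) → α × Bool :=
    fun l i => l.1[i.1]'(by rw [hlen]; exact i.2)
  have hofFn (l : excursions y n) : List.ofFn (toTuple l) = l.1 :=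
    List.ext_getElem (by simp [hlen]) (by simp [toTuple])
  rw [trivialWordCount, ← Nat.card_eq_finsetCard]
  refine Nat.card_le_card_of_injective (fun l => ⟨toTuple l, ?_⟩) fun l l' h => ?_
  · rw [hofFn]
    exact (isExcursion_of_mem_excursions l.2).1.1
  · rw [Subtype.mk.injEq] at h
    exact Subtype.ext (by rw [← hofFn l, h, hofFn])

theorem four_mul_pow_le_sq_mul_trivialWordCount [Nonempty α] {n : ℕ} (hn : 0 < n) :
    (4 * (2 * Fintype.card α - 1)) ^ n ≤ (2 * n) ^ 2 * trivialWordCount α (2 * n) := by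
  have hcentral := Nat.four_pow_le_two_mul_self_mul_centralBinom n hn
  rw [← succ_mul_catalan_eq_centralBinom] at hcentral
  calc (4 * (2 * Fintype.card α - 1)) ^ n
      = 4 ^ n * (2 * Fintype.card α - 1) ^ n := mul_pow _ _ _
    _ ≤ 2 * n * ((n + 1) * catalan n) * (2 * Fintype.card α - 1) ^ n := by gcongr
    _ = 2 * n * (n + 1) * ((2 * Fintype.card α - 1) ^ n * catalan n) := by ring
    _ ≤ (2 * n) ^ 2 * ((2 * Fintype.card α - 1) ^ n * catalan n) := by
      gcongr
      nlinarith
    _ ≤ (2 * n) ^ 2 * trivialWordCount α (2 * n) := by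
      rw [← card_excursions (Classical.arbitrary (α × Bool))]
      gcongr
      exact card_excursions_le_trivialWordCount _ n

theorem limsup_trivialWordCount_rpow_one_div [Nonempty α] :
    limsup (fun n : ℕ => (trivialWordCount α n : ℝ≥0∞) ^ (1 / (n : ℝ))) atTop
      = ENNReal.ofReal (2 * √(2 * Fintype.card α - 1)) := by
  refine le_antisymm (ENNReal.limsup_rpow_one_div_le_of_le_pow fun n => ?_)
    (ENNReal.le_limsup_rpow_one_div_of_frequently 2 (frequently_atTop.2 fun N =>
      ⟨2 * (N + 1), by omega, ?_⟩))
  · rw [← ofReal_pow (by positivity), ← ofReal_natCast]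
    exact ofReal_le_ofReal (trivialWordCount_le n)
  · have hk : 1 ≤ Fintype.card α := Fintype.card_pos
    have hk' : (1 : ℝ) ≤ Fintype.card α := by exact_mod_cast hk
    have hpow : ENNReal.ofReal (2 * √(2 * Fintype.card α - 1)) ^ (2 * (N + 1))
        = ((4 * (2 * Fintype.card α - 1) : ℕ) : ℝ≥0∞) ^ (N + 1) := by
      rw [← ofReal_pow (by positivity), pow_mul, mul_pow, Real.sq_sqrt (by linarith),
        ← ofReal_natCast, ← ofReal_pow (by positivity), Nat.cast_mul, Nat.cast_sub (by omega)]
      norm_num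
    rw [hpow]
    exact_mod_cast four_mul_pow_le_sq_mul_trivialWordCount N.succ_pos

end FreeGroup

-- `f2Letter` reads `true` as an inverse, the opposite of the convention of `FreeGroup.mk`.
theorem f2TrivialCount_eq_trivialWordCount (n : ℕ) :
    f2TrivialCount n = FreeGroup.trivialWordCount (Fin 2) n := by
  have hprod (w : Fin n → Fin 2 × Bool) : (List.ofFn fun i => f2Letter (w i)).prod
      = FreeGroup.mk (List.ofFn fun i => ((w i).1, !(w i).2)) := by
    rw [← FreeGroup.lift_of_apply (FreeGroup.mk _), FreeGroup.lift_mk, List.map_ofFn]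
    congr 2
    funext i
    rw [Function.comp_apply]
    rcases w i with ⟨a, _ | _⟩ <;> rfl
  exact Nat.card_congr <| Equiv.subtypeEquiv
    (Equiv.piCongrRight fun _ => (Equiv.refl _).prodCongr Equiv.boolNot) fun w => by
      rw [hprod]; rfl

/-- For the free group on two generators with the standard generating set,
the growth rate of trivial words is `ρ = limsup rₙ^(1/n) = 2√3`. -/
theorem stmt16 :
    Filter.limsup (fun n : ℕ => ((f2TrivialCount n : ℝ≥0∞)) ^ (1 / (n : ℝ))) atTop
      = ENNReal.ofReal (2 * Real.sqrt 3) := by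
  simp_rw [f2TrivialCount_eq_trivialWordCount, FreeGroup.limsup_trivialWordCount_rpow_one_div]
  norm_num
end
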